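/- arXiv:1406.6682 — 3 statements merged into one kernel-verified Lean document; each statement's English description precedes it below -/
import Mathlib

section
/- Let M be a commutative band ordered Γ-semigroup (aγa = a and aγb = bγa for all a,b ∈ M, γ ∈ Γ) whose order satisfies: a ≤ b if and only if aγb = a for all γ ∈ Γ. Then for every a ∈ M, the principal filter N(a) equals [a) = {t ∈ M : t ≥ a}. -/
def IsFilter {M Γ : Type*} [PartialOrder M] (mul : M → Γ → M → M) (F : Set M) : Prop :=
  F.Nonempty ∧ (∀ a b : M, ∀ γ : Γ, a ∈ F → b ∈ F → mul a γ b ∈ F) ∧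
  (∀ a b : M, ∀ γ : Γ, mul a γ b ∈ F → a ∈ F ∧ b ∈ F) ∧
  (∀ a b : M, a ∈ F → a ≤ b → b ∈ F)

def Nfil {M Γ : Type*} [PartialOrder M] (mul : M → Γ → M → M) (a : M) : Set M :=
  ⋂₀ {F : Set M | IsFilter mul F ∧ a ∈ F}

def IsSemilatticeCong {M Γ : Type*} (mul : M → Γ → M → M) (σ : M → M → Prop) : Prop :=
  Equivalence σ ∧
  (∀ a b c : M, ∀ γ : Γ, σ a b → σ (mul a γ c) (mul b γ c)) ∧
  (∀ a b c : M, ∀ γ : Γ, σ a b → σ (mul c γ a) (mul c γ b)) ∧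
  (∀ a : M, ∀ γ : Γ, σ (mul a γ a) a) ∧
  (∀ a b : M, ∀ γ : Γ, σ (mul a γ b) (mul b γ a))
theorem stmt_7 {M Γ : Type*} [PartialOrder M] [Nonempty M] [Nonempty Γ]
    (mul : M → Γ → M → M)
    (assoc : ∀ (a b c : M) (γ μ : Γ), mul (mul a γ b) μ c = mul a γ (mul b μ c))
    (compat_r : ∀ (a b c : M) (γ : Γ), a ≤ b → mul a γ c ≤ mul b γ c)
    (compat_l : ∀ (a b c : M) (γ : Γ), a ≤ b → mul c γ a ≤ mul c γ b)
    (band : ∀ (a : M) (γ : Γ), mul a γ a = a)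
    (comm : ∀ (a b : M) (γ : Γ), mul a γ b = mul b γ a)
    (ord : ∀ a b : M, a ≤ b ↔ ∀ γ : Γ, mul a γ b = a) :
    ∀ a : M, Nfil mul a = {t : M | a ≤ t} := by
  intro a
  have hfil : IsFilter mul {t : M | a ≤ t} ∧ a ∈ {t : M | a ≤ t} := by
    refine ⟨⟨⟨a, le_refl a⟩, ?_, ?_, ?_⟩, le_refl a⟩
    · intro b c γ hb hc
      simp only [Set.mem_setOf_eq] at *
      rw [ord] at hb hc ⊢
      intro μ
      rw [← assoc, hb μ, hc γ]
    · intro b c γ h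
      simp only [Set.mem_setOf_eq] at *
      rw [ord] at h
      constructor
      · rw [ord]
        intro μ
        have : mul (mul b γ c) μ b = mul b γ c := by
          rw [comm (mul b γ c) b μ, ← assoc, band]
        calc mul a μ b = mul (mul a μ (mul b γ c)) μ b := by rw [h μ]
          _ = mul a μ (mul (mul b γ c) μ b) := by rw [assoc]
          _ = a := by rw [this, h μ]
      · rw [ord]
        intro μ
        have : mul (mul b γ c) μ c = mul b γ c := by
          rw [assoc, band]
        calc mul a μ c = mul (mul a μ (mul b γ c)) μ c := by rw [h μ]
          _ = mul a μ (mul (mul b γ c) μ c) := by rw [assoc]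
          _ = a := by rw [this, h μ]
    · intro b c hb hbc
      exact le_trans hb hbc
  apply Set.Subset.antisymm
  · exact Set.sInter_subset_of_mem hfil
  · intro t ht
    intro F hF
    exact hF.1.2.2.2 a t hF.2 ht
end

section
/- Let M be an ordered Γ-semigroup, σ a semilattice congruence on M, and x ∈ M. Then the set T := {(y)_σ : y ∈ M, (y)_σ ⪰ (x)_σ} is a filter of the quotient Γ-semigroup M/σ, where (y)_σ ⪰ (x)_σ means (x)_σ = (xγy)_σ for all γ ∈ Γ. -/
theorem stmt_9 {M Γ : Type*} [PartialOrder M] [Nonempty M] [Nonempty Γ]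
    (mul : M → Γ → M → M)
    (assoc : ∀ (a b c : M) (γ μ : Γ), mul (mul a γ b) μ c = mul a γ (mul b μ c))
    (compat_r : ∀ (a b c : M) (γ : Γ), a ≤ b → mul a γ c ≤ mul b γ c)
    (compat_l : ∀ (a b c : M) (γ : Γ), a ≤ b → mul c γ a ≤ mul c γ b)
    (σ : M → M → Prop) (hσ : IsSemilatticeCong mul σ) (x : M) :
    -- T is the set of elements whose σ-class is ⪰ (x)_σ; we state that the
    -- corresponding set of classes is a filter of M/σ, via representatives.
    x ∈ {y : M | ∀ γ : Γ, σ x (mul x γ y)} ∧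
    (∀ (y z : M) (γ : Γ), (∀ μ : Γ, σ x (mul x μ y)) → (∀ μ : Γ, σ x (mul x μ z)) →
      ∀ μ : Γ, σ x (mul x μ (mul y γ z))) ∧
    (∀ (a b : M) (γ : Γ), (∀ μ : Γ, σ x (mul x μ (mul a γ b))) →
      (∀ μ : Γ, σ x (mul x μ a)) ∧ (∀ μ : Γ, σ x (mul x μ b))) ∧
    (∀ y z : M, (∀ μ : Γ, σ x (mul x μ y)) → (∀ μ : Γ, σ y (mul y μ z)) →
      ∀ μ : Γ, σ x (mul x μ z)) := by
  obtain ⟨heq, cr, cl, idem, comm⟩ := hσ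
  refine ⟨fun γ => heq.symm (idem x γ), ?_, ?_, ?_⟩
  · intro y z γ hy hz μ
    have h1 : σ (mul (mul x μ y) γ z) (mul x γ z) := cr _ _ z γ (heq.symm (hy μ))
    have h2 : σ (mul x μ (mul y γ z)) x := by
      rw [← assoc]; exact heq.trans h1 (heq.symm (hz γ))
    exact heq.symm h2
  · intro a b γ h
    constructor
    · intro μ
      have h1 : σ (mul x μ a) (mul (mul x μ (mul a γ b)) μ a) := cr _ _ a μ (h μ)
      have h2 : σ (mul (mul a γ b) μ a) (mul a γ b) := by
        have c1 : σ (mul (mul a γ b) μ a) (mul a μ (mul a γ b)) := comm _ _ _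
        have c2 : mul a μ (mul a γ b) = mul (mul a μ a) γ b := (assoc _ _ _ _ _).symm
        have c3 : σ (mul (mul a μ a) γ b) (mul a γ b) := cr _ _ b γ (idem a μ)
        exact heq.trans c1 (c2 ▸ c3)
      have h1' : σ (mul x μ a) (mul x μ (mul (mul a γ b) μ a)) := by
        rw [← assoc]; exact h1
      have h3 : σ (mul x μ (mul (mul a γ b) μ a)) (mul x μ (mul a γ b)) := cl _ _ x μ h2
      exact heq.symm (heq.trans (heq.trans h1' h3) (heq.symm (h μ)))
    · intro μ
      have h1 : σ (mul x μ b) (mul (mul x μ (mul a γ b)) μ b) := cr _ _ b μ (h μ)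
      have h2 : σ (mul (mul a γ b) μ b) (mul a γ b) := by
        rw [assoc]; exact cl _ _ a γ (idem b μ)
      have h1' : σ (mul x μ b) (mul x μ (mul (mul a γ b) μ b)) := by
        rw [← assoc]; exact h1
      have h3 : σ (mul x μ (mul (mul a γ b) μ b)) (mul x μ (mul a γ b)) := cl _ _ x μ h2
      exact heq.symm (heq.trans (heq.trans h1' h3) (heq.symm (h μ)))
  · intro y z hy hz μ
    have h1 : σ (mul x μ z) (mul (mul x μ y) μ z) := cr _ _ z μ (hy μ)
    have h2 : σ (mul (mul x μ y) μ z) (mul x μ y) := by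
      rw [assoc]; exact cl _ _ x μ (heq.symm (hz μ))
    exact heq.symm (heq.trans (heq.trans h1 h2) (heq.symm (hy μ)))
end

section
/- Let M be an ordered Γ-semigroup and let 𝒩 be a semilattice congruence on M such that 𝒩 is the equality relation. Then for all a, b ∈ M and all γ, μ ∈ Γ, aγb = aμb; that is, the multiplication does not depend on the element of Γ, so M is essentially an ordered semilattice. -/
namespace IsSemilatticeCong

variable {M Γ : Type*} {mul : M → Γ → M → M} {N : M → M → Prop}

theorem mul_self_eq (hcong : IsSemilatticeCong mul N) (heq : ∀ a b : M, N a b → a = b)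
    (a : M) (γ : Γ) : mul a γ a = a :=
  heq _ _ (hcong.2.2.2.1 a γ)

theorem mul_comm_eq (hcong : IsSemilatticeCong mul N) (heq : ∀ a b : M, N a b → a = b)
    (a b : M) (γ : Γ) : mul a γ b = mul b γ a :=
  heq _ _ (hcong.2.2.2.2 a b γ)

end IsSemilatticeCong

theorem mul_eq_mul_of_idem_of_comm {M Γ : Type*} (mul : M → Γ → M → M)
    (assoc : ∀ (a b c : M) (γ μ : Γ), mul (mul a γ b) μ c = mul a γ (mul b μ c))
    (idem : ∀ (a : M) (γ : Γ), mul a γ a = a)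
    (comm : ∀ (a b : M) (γ : Γ), mul a γ b = mul b γ a)
    (a b : M) (γ μ : Γ) : mul a γ b = mul a μ b :=
  calc mul a γ b = mul (mul a γ b) μ (mul a γ b) := (idem _ μ).symm
    _ = mul a γ (mul (mul b μ a) γ b) := by rw [assoc, assoc]
    _ = mul a γ (mul a μ (mul b γ b)) := by rw [comm b a μ, assoc]
    _ = mul a μ b := by rw [idem, ← assoc, idem]

theorem stmt_19_general {M Γ : Type*}
    (mul : M → Γ → M → M)
    (assoc : ∀ (a b c : M) (γ μ : Γ), mul (mul a γ b) μ c = mul a γ (mul b μ c))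
    (N : M → M → Prop) (hcong : IsSemilatticeCong mul N)
    (heq : ∀ a b : M, N a b → a = b) :
    ∀ (a b : M) (γ μ : Γ), mul a γ b = mul a μ b :=
  mul_eq_mul_of_idem_of_comm mul assoc (hcong.mul_self_eq heq) (hcong.mul_comm_eq heq)

theorem stmt_19 {M Γ : Type*} [PartialOrder M] [Nonempty M] [Nonempty Γ]
    (mul : M → Γ → M → M)
    (assoc : ∀ (a b c : M) (γ μ : Γ), mul (mul a γ b) μ c = mul a γ (mul b μ c))
    (compat_r : ∀ (a b c : M) (γ : Γ), a ≤ b → mul a γ c ≤ mul b γ c)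
    (compat_l : ∀ (a b c : M) (γ : Γ), a ≤ b → mul c γ a ≤ mul c γ b)
    (N : M → M → Prop) (hcong : IsSemilatticeCong mul N)
    (heq : ∀ a b : M, N a b → a = b) :
    ∀ (a b : M) (γ μ : Γ), mul a γ b = mul a μ b :=
  stmt_19_general mul assoc N hcong heq
end
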